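/- arXiv:0908.0141 — 4 statements merged into one kernel-verified Lean document; each statement's English description precedes it below -/
import Mathlib

section
/- The tower number 𝔱 is at most the bounding number 𝔟 (Rothberger): 𝔱 ≤ 𝔟. -/
/-- `A ⊆* B`: `A \ B` is finite. -/
def AlmostSubset (A B : Set ℕ) : Prop := (A \ B).Finite

/-- `f ≤* g`: eventual domination. -/
def EventuallyLE (f g : ℕ → ℕ) : Prop := ∀ᶠ n in Filter.atTop, f n ≤ g n

/-- A family of functions is unbounded w.r.t. `≤*`. -/
def UnboundedFam (B : Set (ℕ → ℕ)) : Prop := ¬ ∃ g : ℕ → ℕ, ∀ f ∈ B, EventuallyLE f g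

/-- The bounding number `𝔟`. -/
noncomputable def bNumber : Cardinal :=
  sInf { c | ∃ B : Set (ℕ → ℕ), UnboundedFam B ∧ Cardinal.mk B = c }

/-- `A` is an (infinite) pseudointersection of the family `F`. -/
def Pseudointersection (A : Set ℕ) (F : Set (Set ℕ)) : Prop :=
  A.Infinite ∧ ∀ B ∈ F, (A \ B).Finite

/-- The pseudointersection number `𝔭`. -/
noncomputable def pNumber : Cardinal :=
  sInf { c | ∃ F : Set (Set ℕ), (∀ B ∈ F, B.Infinite) ∧
    (∀ B ∈ F, ∀ C ∈ F, B ∩ C ∈ F) ∧ (¬ ∃ A, Pseudointersection A F) ∧ Cardinal.mk F = c }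

/-- A tower: a set of infinite subsets of ℕ which can be enumerated along a
well-order so as to be `⊆*`-decreasing. -/
def IsTower (T : Set (Set ℕ)) : Prop :=
  (∀ x ∈ T, x.Infinite) ∧
  ∃ (I : Type) (r : I → I → Prop), IsWellOrder I r ∧
    ∃ e : I ≃ T, ∀ i j : I, r i j → AlmostSubset (e j).1 (e i).1

/-- The tower number `𝔱`. -/
noncomputable def tNumber : Cardinal :=
  sInf { c | ∃ T : Set (Set ℕ), IsTower T ∧ (¬ ∃ A, Pseudointersection A T) ∧ Cardinal.mk T = c }

/-- The increasing enumeration of a subset of ℕ. -/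
noncomputable def enumOf (x : Set ℕ) : ℕ → ℕ := Nat.nth (· ∈ x)

/-- An unbounded tower: the increasing enumerations form a `≤*`-unbounded family. -/
def UnboundedTower (T : Set (Set ℕ)) : Prop := IsTower T ∧ UnboundedFam (enumOf '' T)

/-!
Let `#ι < 𝔱` and `f : ι → ℕ → ℕ`. Well-order `ι` and choose, by transfinite recursion, a
`⊆*`-decreasing family of infinite sets `X i` whose increasing enumerations dominate `f i`:
at stage `i` the earlier sets form a tower of size `< 𝔱`, hence have a pseudointersection, and a
sparse enough infinite subset of it can serve as `X i`. The completed family is again a tower of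
size `< 𝔱`; for a pseudointersection `A`, `A ⊆* X i` gives `enumOf (X i) n ≤ enumOf A (2 n)` for
large `n`, so `n ↦ enumOf A (2 n)` bounds every `f i`. Hence families of size `< 𝔱` are bounded.
-/

open Cardinal Set

theorem Nat.count_le_count_add_count_and_not (p q : ℕ → Prop) [DecidablePred p]
    [DecidablePred q] (n : ℕ) : count p n ≤ count q n + count (fun k => p k ∧ ¬ q k) n := by
  induction n with
  | zero => simp
  | succ n ih => simp only [count_succ]; split_ifs <;> grind

lemma enumOf_range_of_strictMono {g : ℕ → ℕ} (hg : StrictMono g) : enumOf (range g) = g := by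
  have hinf : (range g).Infinite := infinite_range_of_injective hg.injective
  funext n
  refine (Nat.eq_nth_of_strictMonoOn_of_mapsTo_of_surjOn g ?_ (fun k _ => mem_range_self k)
    (hg.strictMonoOn _) fun h => absurd h hinf).symm
  rintro _ ⟨k, rfl⟩
  exact ⟨k, fun h => absurd h hinf, rfl⟩

lemma exists_infinite_subset_le_enumOf {A : Set ℕ} (hA : A.Infinite) (f : ℕ → ℕ) :
    ∃ Y ⊆ A, Y.Infinite ∧ f ≤ enumOf Y := by
  set h : ℕ → ℕ := fun n => ∑ i ∈ Finset.range (n + 1), (f i + 1)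
  have hh : StrictMono h := strictMono_nat_of_lt_succ fun n => by
    simp only [h, Finset.sum_range_succ _ (n + 1)]; omega
  have hg : StrictMono (enumOf A ∘ h) := (Nat.nth_strictMono hA).comp hh
  refine ⟨range (enumOf A ∘ h), range_subset_iff.2 fun n => Nat.nth_mem_of_infinite hA _,
    infinite_range_of_injective hg.injective, fun n => ?_⟩
  rw [enumOf_range_of_strictMono hg]
  calc f n ≤ f n + 1 := (f n).le_succ
    _ ≤ h n :=
      Finset.single_le_sum (fun i _ => (f i + 1).zero_le) (Finset.self_mem_range_succ n)
    _ ≤ enumOf A (h n) := (Nat.nth_strictMono hA).id_le _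

lemma enumOf_le_enumOf_add_of_almostSubset {A T : Set ℕ} (hA : A.Infinite)
    (hAT : AlmostSubset A T) : ∃ k, ∀ n, enumOf T n ≤ enumOf A (n + k) := by
  classical
  have hT : T.Infinite := (hA.sdiff hAT).mono fun _ hx => by_contra fun h => hx.2 ⟨hx.1, h⟩
  set k := hAT.toFinset.card
  refine ⟨k, fun n => Nat.lt_add_one_iff.1 ((Nat.lt_nth_iff_count_lt (p := (· ∈ T)) hT).1 ?_)⟩
  -- below `m` there are `n + k + 1` elements of `A`, at most `k` of which lie outside `T`
  set m := enumOf A (n + k) + 1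
  have hcountA : Nat.count (· ∈ A) m = n + k + 1 :=
    Nat.count_nth_succ_of_infinite (p := (· ∈ A)) hA _
  have hcountAT : Nat.count (fun x => x ∈ A ∧ x ∉ T) m ≤ k :=
    Nat.count_le_card (p := fun x => x ∈ A ∧ x ∉ T) hAT m
  have := Nat.count_le_count_add_count_and_not (· ∈ A) (· ∈ T) m
  omega

lemma eventuallyLE_enumOf_of_almostSubset {A T : Set ℕ} (hA : A.Infinite)
    (hAT : AlmostSubset A T) : EventuallyLE (enumOf T) fun n => enumOf A (2 * n) := by
  obtain ⟨k, hk⟩ := enumOf_le_enumOf_add_of_almostSubset hA hAT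
  filter_upwards [Filter.eventually_ge_atTop k] with n hn
  exact (hk n).trans (Nat.nth_monotone hA (by omega))

lemma isTower_range {ι : Type} (r : ι → ι → Prop) [IsWellOrder ι r] (t : ι → Set ℕ)
    (ht : ∀ i, (t i).Infinite) (hr : ∀ i j, r i j → AlmostSubset (t j) (t i)) :
    IsTower (range t) := by
  refine ⟨forall_mem_range.2 ht, range t, _,
    (RelEmbedding.preimage ⟨rangeSplitting t, rangeSplitting_injective t⟩ r).isWellOrder,
    Equiv.refl _, fun i j hij => ?_⟩
  simpa only [Equiv.refl_apply, apply_rangeSplitting] using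
    hr (rangeSplitting t i) (rangeSplitting t j) hij

lemma exists_pseudointersection_of_mk_lt_tNumber {ι : Type} (r : ι → ι → Prop)
    [IsWellOrder ι r] (t : ι → Set ℕ) (ht : ∀ i, (t i).Infinite)
    (hr : ∀ i j, r i j → AlmostSubset (t j) (t i)) (hι : #ι < tNumber) : ∃ A, Pseudointersection A (range t) := by
  by_contra h
  have hle : tNumber ≤ #(range t) := csInf_le' ⟨range t, isTower_range r t ht hr, h, rfl⟩
  exact (hle.trans mk_range_le).not_gt hι

section DominatingTower

variable {ι : Type} (f : ι → ℕ → ℕ)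

def IsDominatingStep (i : ι) (prev : ∀ j, WellOrderingRel j i → Set ℕ) (X : Set ℕ) : Prop :=
  X.Infinite ∧ (∀ j h, AlmostSubset X (prev j h)) ∧ EventuallyLE (f i) (enumOf X)

/-- Where no admissible `X` exists, `Classical.epsilon` returns an arbitrary set; below `𝔱` this
never happens (`isDominatingStep_dominatingTower`). -/
noncomputable def dominatingTower : ι → Set ℕ :=
  (IsWellFounded.wf (r := WellOrderingRel)).fix fun i prev =>
    Classical.epsilon (IsDominatingStep f i prev)

lemma dominatingTower_eq (i : ι) :
    dominatingTower f i =
      Classical.epsilon (IsDominatingStep f i fun j _ => dominatingTower f j) :=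
  WellFounded.fix_eq _ _ i

lemma isDominatingStep_dominatingTower (hι : #ι < tNumber) (i : ι) :
    IsDominatingStep f i (fun j _ => dominatingTower f j) (dominatingTower f i) := by
  induction i using (IsWellFounded.wf (r := WellOrderingRel)).induction with
  | _ i ih =>
  rw [dominatingTower_eq]
  apply Classical.epsilon_spec
  obtain ⟨A, hA, hAsub⟩ := exists_pseudointersection_of_mk_lt_tNumber
    (Subrel WellOrderingRel (WellOrderingRel · i)) (fun j => dominatingTower f j)
    (fun j => (ih j j.2).1) (fun j k hjk => (ih k k.2).2.1 j hjk) ((mk_subtype_le _).trans_lt hι)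
  obtain ⟨Y, hYA, hY, hfY⟩ := exists_infinite_subset_le_enumOf hA (f i)
  exact ⟨Y, hY, fun j hj => (hAsub _ ⟨⟨j, hj⟩, rfl⟩).subset (sdiff_subset_sdiff_left hYA),
    Filter.Eventually.of_forall hfY⟩

theorem exists_eventuallyLE_of_mk_lt_tNumber (hι : #ι < tNumber) :
    ∃ g, ∀ i, EventuallyLE (f i) g := by
  have hstep := isDominatingStep_dominatingTower f hι
  obtain ⟨A, hA, hAsub⟩ := exists_pseudointersection_of_mk_lt_tNumber WellOrderingRel
    (dominatingTower f) (fun i => (hstep i).1) (fun i j hij => (hstep j).2.1 i hij) hι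
  exact ⟨fun n => enumOf A (2 * n), fun i =>
    Filter.EventuallyLE.trans (hstep i).2.2
      (eventuallyLE_enumOf_of_almostSubset hA (hAsub _ ⟨i, rfl⟩))⟩

end DominatingTower

lemma unboundedFam_univ : UnboundedFam univ := by
  rintro ⟨g, hg⟩
  obtain ⟨n, hn⟩ := (hg (g + 1) trivial).exists
  exact (g n).lt_succ_self.not_ge hn

/-- Rothberger: `𝔱 ≤ 𝔟`. -/
theorem tNumber_le_bNumber : tNumber ≤ bNumber := by
  refine le_csInf ⟨_, univ, unboundedFam_univ, rfl⟩ ?_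
  rintro _ ⟨B, hB, rfl⟩
  by_contra! hlt
  obtain ⟨g, hg⟩ := exists_eventuallyLE_of_mk_lt_tNumber (Subtype.val : B → ℕ → ℕ) hlt
  exact hB ⟨g, fun f hf => hg ⟨f, hf⟩⟩
end

section
/- There exists an unbounded tower of cardinality 𝔱 if and only if 𝔱 = 𝔟. -/
/-!
A tower `T` with `#T < 𝔱` has a pseudointersection `A`; since `A ⊆* x` shifts the enumeration
of `x` by a constant, `n ↦ enumOf A (2 * n)` eventually dominates the enumeration of every
`x ∈ T`, so the enumerations of `T` are bounded.

Conversely, any family `B` of size at most `𝔱` is dominated pointwise by the enumerations of a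
tower indexed by the initial ordinal of `#B`: at stage `i` the tower built so far is shorter
than `𝔱`, so it has a pseudointersection, which is thinned out until its enumeration
dominates the `i`-th function of `B`. Applied to an unbounded `B` this gives `𝔱 ≤ 𝔟`, and, when
`𝔱 = 𝔟`, an unbounded tower of size `𝔱`.
-/

open Cardinal Set

open Classical in
lemma count_mem_le_count_mem_add_card {A B : Set ℕ} (h : (A \ B).Finite) (m : ℕ) :
    Nat.count (· ∈ A) m ≤ Nat.count (· ∈ B) m + h.toFinset.card := by
  simp only [Nat.count_eq_card_filter_range]
  calc _ ≤ ((Finset.range m).filter (· ∈ B) ∪ h.toFinset).card :=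
        Finset.card_le_card fun a ha => by by_cases hb : a ∈ B <;> simp_all
    _ ≤ _ := Finset.card_union_le _ _

lemma AlmostSubset.exists_enumOf_le_enumOf_add {A B : Set ℕ} (h : AlmostSubset A B)
    (hA : A.Infinite) : ∃ k, ∀ n, enumOf B n ≤ enumOf A (n + k) := by
  classical
  refine ⟨h.toFinset.card, fun n => Nat.lt_succ_iff.1
    (Nat.nth_lt_of_lt_count (p := (· ∈ B)) (n := enumOf A (n + h.toFinset.card) + 1) ?_)⟩
  have hcount : Nat.count (· ∈ A) (enumOf A (n + h.toFinset.card) + 1) =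
      n + h.toFinset.card + 1 := Nat.count_nth_succ_of_infinite (p := (· ∈ A)) hA _
  have := count_mem_le_count_mem_add_card h (enumOf A (n + h.toFinset.card) + 1)
  omega

lemma exists_strictMono_ge (f : ℕ → ℕ) : ∃ S : ℕ → ℕ, StrictMono S ∧ ∀ n, f n ≤ S n :=
  ⟨fun n => ∑ j ∈ Finset.range (n + 1), (f j + 1),
    strictMono_nat_of_lt_succ fun n => by simp [Finset.sum_range_succ _ (n + 1)],
    fun n => by simp only [Finset.sum_range_succ]; omega⟩

lemma Set.Infinite.exists_subset_le_enumOf {A : Set ℕ} (hA : A.Infinite) (f : ℕ → ℕ) :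
    ∃ y ⊆ A, y.Infinite ∧ ∀ n, f n ≤ enumOf y n := by
  obtain ⟨S, hS, hfS⟩ := exists_strictMono_ge f
  have hg : StrictMono (enumOf A ∘ S) := (Nat.nth_strictMono hA).comp hS
  have hy : (range (enumOf A ∘ S)).Infinite := infinite_range_of_injective hg.injective
  refine ⟨_, range_subset_iff.2 fun n => Nat.nth_mem_of_infinite hA _, hy, fun n => ?_⟩
  calc f n ≤ S n := hfS n
    _ ≤ enumOf A (S n) := Nat.le_nth fun hf => absurd hf hA
    _ ≤ enumOf (range (enumOf A ∘ S)) n :=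
      Nat.le_nth_of_monotoneOn_of_surjOn _
        (by rintro _ ⟨m, rfl⟩; exact ⟨m, fun hf => absurd hf hy, rfl⟩)
        (hg.monotone.monotoneOn _) fun hf => absurd hf hy

-- Any section of `x` over its range is injective, so it pulls back the well-order of `ι`.
lemma isTower_range_s8 {ι : Type} [LinearOrder ι] [WellFoundedLT ι] {x : ι → Set ℕ}
    (hinf : ∀ i, (x i).Infinite) (hanti : ∀ i j, i < j → AlmostSubset (x j) (x i)) :
    IsTower (range x) := by
  refine ⟨forall_mem_range.2 hinf, range x, rangeSplitting x ⁻¹'o (· < ·),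
    (rangeSplitting_injective x).isWellOrder _, Equiv.refl _, fun s t hst => ?_⟩
  simpa only [apply_rangeSplitting, Equiv.refl_apply] using hanti _ _ hst

lemma IsTower.exists_pseudointersection {T : Set (Set ℕ)} (hT : IsTower T)
    (h : #T < tNumber) : ∃ A, Pseudointersection A T := by
  by_contra hA
  exact h.not_ge (csInf_le' ⟨T, hT, hA, rfl⟩)

lemma Pseudointersection.eventuallyLE_enumOf_two_mul {A x : Set ℕ} {T : Set (Set ℕ)}
    (hA : Pseudointersection A T) (hx : x ∈ T) (hxinf : x.Infinite) :
    EventuallyLE (enumOf x) fun n => enumOf A (2 * n) := by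
  obtain ⟨k, hk⟩ := AlmostSubset.exists_enumOf_le_enumOf_add (hA.2 x hx) hA.1
  filter_upwards [Filter.eventually_ge_atTop k] with n hn
  calc enumOf x n ≤ enumOf x (2 * n - k) := Nat.nth_monotone hxinf (by omega)
    _ ≤ enumOf A (2 * n - k + k) := hk _
    _ = enumOf A (2 * n) := by rw [Nat.sub_add_cancel (by omega)]

lemma IsTower.exists_bound_of_mk_lt {T : Set (Set ℕ)} (hT : IsTower T) (h : #T < tNumber) :
    ∃ g : ℕ → ℕ, ∀ f ∈ enumOf '' T, EventuallyLE f g := by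
  obtain ⟨A, hA⟩ := hT.exists_pseudointersection h
  exact ⟨fun n => enumOf A (2 * n), forall_mem_image.2 fun x hx =>
    hA.eventuallyLE_enumOf_two_mul hx (hT.1 x hx)⟩

lemma exists_almostSubset_le_enumOf {κ : Type} [LinearOrder κ] [WellFoundedLT κ]
    (hκ : #κ < tNumber) {y : κ → Set ℕ} (hinf : ∀ k, (y k).Infinite)
    (hanti : ∀ j k, j < k → AlmostSubset (y k) (y j)) (f : ℕ → ℕ) :
    ∃ z : Set ℕ, z.Infinite ∧ (∀ k, AlmostSubset z (y k)) ∧ ∀ n, f n ≤ enumOf z n := by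
  obtain ⟨A, hA, hAy⟩ :=
    (isTower_range_s8 hinf hanti).exists_pseudointersection (mk_range_le.trans_lt hκ)
  obtain ⟨z, hzA, hz, hfz⟩ := hA.exists_subset_le_enumOf f
  exact ⟨z, hz, fun k => (hAy _ (mem_range_self k)).subset (sdiff_subset_sdiff_left hzA), hfz⟩

lemma exists_almostAntitone_le_enumOf {ι : Type} [LinearOrder ι] [WellFoundedLT ι]
    (hι : ∀ i : ι, #(Iio i) < tNumber) (f : ι → ℕ → ℕ) :
    ∃ x : ι → Set ℕ, (∀ i, (x i).Infinite) ∧ (∀ i j, i < j → AlmostSubset (x j) (x i)) ∧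
      ∀ i n, f i n ≤ enumOf (x i) n := by
  classical
  let Good (i : ι) (z : Set ℕ) (prev : ∀ j < i, Set ℕ) : Prop :=
    z.Infinite ∧ (∀ j hj, AlmostSubset z (prev j hj)) ∧ ∀ n, f i n ≤ enumOf z n
  let x : ι → Set ℕ :=
    wellFounded_lt.fix fun i prev => if h : ∃ z, Good i z prev then h.choose else ∅
  have hx : ∀ i, Good i (x i) fun j _ => x j := by
    intro i
    induction i using WellFoundedLT.induction with
    | _ i ih =>
      have hex : ∃ z, Good i z fun j _ => x j :=
        have ⟨z, hz, hzx, hfz⟩ := exists_almostSubset_le_enumOf (hι i) (y := fun j => x j)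
          (fun j => (ih j j.2).1) (fun j k hjk => (ih k k.2).2.1 j hjk) (f i)
        ⟨z, hz, fun j hj => hzx ⟨j, hj⟩, hfz⟩
      rw [show x i = _ from wellFounded_lt.fix_eq _ i, dif_pos hex]
      exact hex.choose_spec
  exact ⟨x, fun i => (hx i).1, fun i j hij => (hx j).2.1 i hij, fun i => (hx i).2.2⟩

lemma UnboundedFam.exists_unboundedTower {B : Set (ℕ → ℕ)} (hB : UnboundedFam B)
    (hBt : #B ≤ tNumber) : ∃ T, UnboundedTower T ∧ #T ≤ #B := by
  obtain ⟨e⟩ : Nonempty ((#B).ord.ToType ≃ B) := Cardinal.eq.1 (mk_ord_toType _)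
  obtain ⟨x, hinf, hanti, hdom⟩ := exists_almostAntitone_le_enumOf
    (fun i => (by simpa using mk_Iio_lt i : #(Iio i) < #B).trans_le hBt) fun i => e i
  refine ⟨range x, ⟨isTower_range_s8 hinf hanti, ?_⟩, mk_range_le.trans_eq (mk_ord_toType _)⟩
  rintro ⟨g, hg⟩
  refine hB ⟨g, fun f hf => ?_⟩
  have hfx : ∀ n, f n ≤ enumOf (x (e.symm ⟨f, hf⟩)) n := by
    simpa using hdom (e.symm ⟨f, hf⟩)
  exact (hg _ (mem_image_of_mem _ (mem_range_self _))).mono fun n hn => (hfx n).trans hn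

lemma UnboundedTower.bNumber_le {T : Set (Set ℕ)} (hT : UnboundedTower T) : bNumber ≤ #T :=
  le_trans (csInf_le' ⟨_, hT.2, rfl⟩) mk_image_le

lemma exists_unboundedFam_mk_eq_bNumber : ∃ B, UnboundedFam B ∧ #B = bNumber :=
  csInf_mem (s := {c | ∃ B : Set (ℕ → ℕ), UnboundedFam B ∧ #B = c})
    ⟨_, univ, unboundedFam_univ, rfl⟩

/-- There is an unbounded tower of cardinality `𝔱` iff `𝔱 = 𝔟`. -/
theorem unbounded_tower_iff_t_eq_b :
    (∃ T : Set (Set ℕ), UnboundedTower T ∧ Cardinal.mk T = tNumber) ↔ tNumber = bNumber := by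
  constructor
  · rintro ⟨T, hT, hTt⟩
    exact tNumber_le_bNumber.antisymm (hTt ▸ hT.bNumber_le)
  · intro htb
    obtain ⟨B, hB, hBb⟩ := exists_unboundedFam_mk_eq_bNumber
    have hBt : #B = tNumber := hBb.trans htb.symm
    obtain ⟨T, hT, hTB⟩ := hB.exists_unboundedTower hBt.le
    exact ⟨T, hT, (hTB.trans hBt.le).antisymm (htb ▸ hT.bNumber_le)⟩
end

section
/- A topological space X satisfies S₁(Ω,Γ) if and only if it satisfies the binomial property (Ω over Γ): every ω-cover of X contains a subfamily which is a γ-cover of X. (Gerlits–Nagy) -/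
/-! Let `X` be a γ-set and `U n` ω-covers. Take a γ-sequence `g k` inside `U 0`. The sets
`g k ∩ u 0 ∩ ⋯ ∩ u k` with `u i ∈ U i` form an ω-cover, so it contains a γ-sequence `s j`.
No level `k` occurs infinitely often along `s` (otherwise `g k` would be all of `X`), so for
each `n` there is a member `s j` with `j ≥ n` and level `≥ n`; its factor `u n ∈ U n` is the
`n`-th selection, and these selections again form a γ-sequence. -/
/-- An ω-cover of `X`: open sets, not containing `X` itself, such that every
finite subset of `X` is contained in some member. -/
def IsOmegaCover {X : Type*} [TopologicalSpace X] (U : Set (Set X)) : Prop :=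
  (∀ u ∈ U, IsOpen u) ∧ Set.univ ∉ U ∧ ∀ F : Set X, F.Finite → ∃ u ∈ U, F ⊆ u

/-- A γ-cover of `X`: an infinite family of open sets such that every point
belongs to all but finitely many members. -/
def IsGammaCover {X : Type*} [TopologicalSpace X] (U : Set (Set X)) : Prop :=
  U.Infinite ∧ (∀ u ∈ U, IsOpen u) ∧ ∀ x : X, {u ∈ U | x ∉ u}.Finite

/-- The selection principle `S₁(Ω,Γ)`. -/
def S1OmegaGamma (X : Type*) [TopologicalSpace X] : Prop :=
  ∀ U : ℕ → Set (Set X), (∀ n, IsOmegaCover (U n)) →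
    ∃ V : ℕ → Set X, (∀ n, V n ∈ U n) ∧ IsGammaCover (Set.range V)

/-- `X` is a γ-set: every ω-cover contains a γ-subcover (the property `(Ω over Γ)`). -/
def GammaSet (X : Type*) [TopologicalSpace X] : Prop :=
  ∀ U : Set (Set X), IsOmegaCover U → ∃ V ⊆ U, IsGammaCover V

/-- The selection principle `S₁(Γ,Γ)`. -/
def S1GammaGamma (X : Type*) [TopologicalSpace X] : Prop :=
  ∀ U : ℕ → Set (Set X), (∀ n, IsGammaCover (U n)) →
    ∃ V : ℕ → Set X, (∀ n, V n ∈ U n) ∧ IsGammaCover (Set.range V)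

open Filter Set

section SetSequences

variable {X ι : Type*}

lemma eq_univ_of_frequently_subset {l : Filter ι} {s : ι → Set X}
    (hs : ∀ x, ∀ᶠ i in l, x ∈ s i) {A : Set X} (hA : ∃ᶠ i in l, s i ⊆ A) : A = univ :=
  eq_univ_of_forall fun x =>
    let ⟨_, hsA, hx⟩ := (hA.and_eventually (hs x)).exists
    hsA hx

lemma infinite_range_of_eventually_mem {l : Filter ι} [l.NeBot] {s : ι → Set X}
    (hs : ∀ x, ∀ᶠ i in l, x ∈ s i) (hne : ∀ i, s i ≠ univ) : (range s).Infinite := by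
  intro hfin
  have hleave : ∀ u ∈ range s, ∀ᶠ i in l, s i ≠ u := by
    rintro u ⟨m, rfl⟩
    exact not_frequently.1 fun h =>
      hne m (eq_univ_of_frequently_subset hs (h.mono fun _ hi => hi.subset))
  obtain ⟨i, hi⟩ := ((eventually_all_finite hfin).2 hleave).exists
  exact hi _ (mem_range_self i) rfl

def diagonalCover (U : ℕ → Set (Set X)) (g : ℕ → Set X) : Set (Set X) :=
  {s | ∃ k, ∃ u : ℕ → Set X, (∀ i, u i ∈ U i) ∧ s = g k ∩ ⋂ i ≤ k, u i}

lemma exists_selection_of_diagonalCover {U : ℕ → Set (Set X)} {g : ℕ → Set X}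
    (hg_ne : ∀ k, g k ≠ univ) {s : ℕ → Set X}
    (hsU : ∀ j, s j ∈ diagonalCover U g) (hs : ∀ x, ∀ᶠ j in atTop, x ∈ s j) :
    ∃ V : ℕ → Set X, (∀ n, V n ∈ U n) ∧ ∀ x, ∀ᶠ n in atTop, x ∈ V n := by
  choose level u huU hs_eq using hsU
  have hlevel_ne : ∀ k, ∀ᶠ j in atTop, level j ≠ k := fun k =>
    not_frequently.1 fun h => hg_ne k <| eq_univ_of_frequently_subset hs <|
      h.mono fun j hj => hj ▸ (hs_eq j).trans_subset inter_subset_left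
  have hlevel_ge : ∀ n, ∀ᶠ j in atTop, n ≤ level j := fun n =>
    ((eventually_all_finite (finite_Iio n)).2 fun k _ => hlevel_ne k).mono
      fun j hj => not_lt.1 fun hlt => hj _ hlt rfl
  choose j hj using fun n => ((hlevel_ge n).and (eventually_ge_atTop n)).exists
  have hsub : ∀ n, s (j n) ⊆ u (j n) n := fun n =>
    (hs_eq (j n)).trans_subset (inter_subset_right.trans (biInter_subset_of_mem (hj n).1))
  have hj_tendsto : Tendsto j atTop atTop := tendsto_atTop_mono (fun n => (hj n).2) tendsto_id
  exact ⟨fun n => u (j n) n, fun n => huU (j n) n,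
    fun x => (hj_tendsto.eventually (hs x)).mono fun n hn => hsub n hn⟩

end SetSequences

section Covers

variable {X : Type*} [TopologicalSpace X]

lemma IsOmegaCover.isOpen_of_mem {U : Set (Set X)} (hU : IsOmegaCover U) {u : Set X}
    (hu : u ∈ U) : IsOpen u :=
  hU.1 u hu

lemma IsOmegaCover.ne_univ_of_mem {U : Set (Set X)} (hU : IsOmegaCover U) {u : Set X}
    (hu : u ∈ U) : u ≠ univ :=
  fun h => hU.2.1 (h ▸ hu)

lemma IsGammaCover.exists_seq {G : Set (Set X)} (hG : IsGammaCover G) :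
    ∃ g : ℕ → Set X, (∀ k, g k ∈ G) ∧ ∀ x, ∀ᶠ k in atTop, x ∈ g k := by
  set e := hG.1.natEmbedding
  refine ⟨fun k => e k, fun k => (e k).2, fun x => ?_⟩
  have hinj : Function.Injective fun k => (e k : Set X) :=
    Subtype.val_injective.comp e.injective
  rw [← Nat.cofinite_eq_atTop, eventually_cofinite]
  exact ((hG.2.2 x).preimage hinj.injOn).subset fun k hk => ⟨(e k).2, hk⟩

lemma isGammaCover_range {s : ℕ → Set X} (hopen : ∀ n, IsOpen (s n)) (hne : ∀ n, s n ≠ univ)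
    (hs : ∀ x, ∀ᶠ n in atTop, x ∈ s n) : IsGammaCover (range s) := by
  refine ⟨infinite_range_of_eventually_mem hs hne, forall_mem_range.2 hopen, fun x => ?_⟩
  have hfin : {n | x ∉ s n}.Finite := by
    rw [← eventually_cofinite, Nat.cofinite_eq_atTop]
    exact hs x
  refine (hfin.image s).subset ?_
  rintro _ ⟨⟨n, rfl⟩, hx⟩
  exact ⟨n, hx, rfl⟩

lemma isOmegaCover_diagonalCover {U : ℕ → Set (Set X)} {g : ℕ → Set X}
    (hU : ∀ n, IsOmegaCover (U n)) (hg_open : ∀ k, IsOpen (g k))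
    (hg_ne : ∀ k, g k ≠ univ) (hg : ∀ x, ∀ᶠ k in atTop, x ∈ g k) :
    IsOmegaCover (diagonalCover U g) := by
  refine ⟨?_, ?_, fun F hF => ?_⟩
  · rintro _ ⟨k, u, hu, rfl⟩
    exact (hg_open k).inter
      ((finite_Iic k).isOpen_biInter fun i _ => (hU i).isOpen_of_mem (hu i))
  · rintro ⟨k, u, -, hk⟩
    exact hg_ne k (univ_subset_iff.1 (hk.trans_subset inter_subset_left))
  · obtain ⟨k, hFk⟩ := ((eventually_all_finite hF).2 fun x _ => hg x).exists
    choose u huU hFu using fun i => (hU i).2.2 F hF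
    exact ⟨_, ⟨k, u, huU, rfl⟩, subset_inter hFk (subset_iInter₂ fun i _ => hFu i)⟩

end Covers

lemma S1OmegaGamma.gammaSet {X : Type*} [TopologicalSpace X] (h : S1OmegaGamma X) :
    GammaSet X := fun U hU =>
  let ⟨V, hVU, hV⟩ := h (fun _ => U) fun _ => hU
  ⟨range V, range_subset_iff.2 hVU, hV⟩

/-- Gerlits–Nagy: `S₁(Ω,Γ)` is equivalent to the property `(Ω over Γ)`. -/
theorem s1OmegaGamma_iff_gammaSet (X : Type*) [TopologicalSpace X] :
    S1OmegaGamma X ↔ GammaSet X := by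
  refine ⟨S1OmegaGamma.gammaSet, fun h U hU => ?_⟩
  obtain ⟨G, hGU, hG⟩ := h (U 0) (hU 0)
  obtain ⟨g, hgG, hg⟩ := hG.exists_seq
  have hg_ne k : g k ≠ univ := (hU 0).ne_univ_of_mem (hGU (hgG k))
  obtain ⟨S, hSH, hS⟩ := h _ <| isOmegaCover_diagonalCover hU
    (fun k => (hU 0).isOpen_of_mem (hGU (hgG k))) hg_ne hg
  obtain ⟨s, hsS, hs⟩ := hS.exists_seq
  obtain ⟨V, hVU, hV⟩ := exists_selection_of_diagonalCover hg_ne (fun j => hSH (hsS j)) hs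
  exact ⟨V, hVU, isGammaCover_range (fun n => (hU n).isOpen_of_mem (hVU n))
    (fun n => (hU n).ne_univ_of_mem (hVU n)) hV⟩
end

section
/- The critical cardinality of the γ-set property for subsets of Cantor space equals 𝔭 restricted from above: every subset of Cantor space {0,1}^ℕ of cardinality strictly less than 𝔭 is a γ-set (satisfies S₁(Ω,Γ)). -/
open Cardinal Set

section OmegaCover

variable {X : Type*} [TopologicalSpace X] {U : Set (Set X)}

lemma IsOmegaCover.exists_notMem (hU : IsOmegaCover U) {u : Set X} (hu : u ∈ U) :
    ∃ x, x ∉ u :=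
  (ne_univ_iff_exists_notMem u).mp fun h => hU.2.1 (h ▸ hu)

/-- Each member of `U` misses a point; if only finitely many members contained `F`, the finite
set `F` together with these points would lie in no member. -/
lemma IsOmegaCover.infinite_setOf_subset (hU : IsOmegaCover U) {F : Set X} (hF : F.Finite) :
    {u ∈ U | F ⊆ u}.Infinite := by
  intro hfin
  choose p hp using fun u : {u ∈ U | F ⊆ u} => hU.exists_notMem u.2.1
  have : Finite {u ∈ U | F ⊆ u} := hfin.to_subtype
  obtain ⟨u, huU, hsub⟩ := hU.2.2 (F ∪ range p) (hF.union (finite_range p))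
  exact hp ⟨u, huU, subset_union_left.trans hsub⟩ (hsub (Or.inr ⟨_, rfl⟩))

lemma IsOmegaCover.infinite (hU : IsOmegaCover U) : U.Infinite :=
  (hU.infinite_setOf_subset finite_empty).mono fun _ hu => hu.1

lemma IsOmegaCover.infinite_space (hU : IsOmegaCover U) : Infinite X := by
  by_contra hX
  rw [not_infinite_iff_finite] at hX
  exact hU.infinite (toFinite U)

/-- A finite set covered by a member of `U` is already covered by a finite union of basic open
sets inside that member; choosing one member of `U` for each such finite union gives a countable
subcover. -/
lemma IsOmegaCover.exists_countable_subcover [SecondCountableTopology X] (hU : IsOmegaCover U) :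
    ∃ V ⊆ U, V.Countable ∧ IsOmegaCover V := by
  set B := TopologicalSpace.countableBasis X
  let G : Set (Set (Set X)) := {s | s.Finite ∧ s ⊆ B ∧ ∃ u ∈ U, ⋃₀ s ⊆ u}
  have hG : G.Countable :=
    (countable_ofPred_finite_subset (TopologicalSpace.countable_countableBasis X)).mono
      fun _ hs => (⟨hs.1, hs.2.1⟩ : _ ∧ _)
  have := hG.to_subtype
  choose c hcU hc using fun s : G => s.2.2.2
  have hV : range c ⊆ U := range_subset_iff.mpr hcU
  refine ⟨range c, hV, countable_range c, fun u hu => hU.1 u (hV hu),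
    fun h => hU.2.1 (hV h), fun F hF => ?_⟩
  obtain ⟨u, huU, hFu⟩ := hU.2.2 F hF
  choose b hbB hxb hbu using fun x : F =>
    (TopologicalSpace.isBasis_countableBasis X).exists_subset_of_mem_open (hFu x.2) (hU.1 u huU)
  have : Finite F := hF.to_subtype
  let s : G := ⟨range b, finite_range b, range_subset_iff.mpr hbB,
    u, huU, sUnion_subset (forall_mem_range.mpr hbu)⟩
  exact ⟨c s, mem_range_self s, fun x hx =>
    hc s (mem_sUnion_of_mem (hxb ⟨x, hx⟩) (mem_range_self _))⟩

end OmegaCover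

lemma exists_pseudointersection_of_mk_lt_pNumber {F : Set (Set ℕ)}
    (hinf : ∀ B ∈ F, B.Infinite) (hinter : ∀ B ∈ F, ∀ C ∈ F, B ∩ C ∈ F) (hF : #F < pNumber) :
    ∃ A, Pseudointersection A F := by
  by_contra hno
  exact hF.not_ge (csInf_le' ⟨F, hinf, hinter, hno, rfl⟩)

section GammaSet

variable {X : Type} [TopologicalSpace X]

/-- The sets `{n | F ⊆ u n}`, `F` finite, form a family of at most `#X < 𝔭` infinite sets
closed under intersection; a pseudointersection `S` of it makes `u '' S` a γ-cover. -/
lemma exists_gammaCover_image_of_isOmegaCover_range {u : ℕ → Set X}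
    (hu : Function.Injective u) (hω : IsOmegaCover (range u)) (hX : #X < pNumber) :
    ∃ S, IsGammaCover (u '' S) := by
  classical
  have := hω.infinite_space
  let A : Finset X → Set ℕ := fun F => u ⁻¹' {w | ↑F ⊆ w}
  have hA : ∀ F, (A F).Infinite := fun F => by
    have h : {w ∈ range u | ↑F ⊆ w} = u '' A F := by
      rw [image_preimage_eq_range_inter]; rfl
    exact (h ▸ hω.infinite_setOf_subset F.finite_toSet).of_image u
  have hAinter : ∀ F G, A F ∩ A G = A (F ∪ G) := fun F G => by
    ext n; simp [A]
  have hcard : #(range A) < pNumber :=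
    mk_range_le.trans_lt ((mk_finset_of_infinite X).trans_lt hX)
  obtain ⟨S, hS, hSA⟩ := exists_pseudointersection_of_mk_lt_pNumber
    (forall_mem_range.mpr hA)
    (forall_mem_range.mpr fun F => forall_mem_range.mpr fun G => ⟨F ∪ G, (hAinter F G).symm⟩)
    hcard
  refine ⟨S, hS.image hu.injOn, forall_mem_image.mpr fun n _ => hω.1 _ (mem_range_self n),
    fun x => ((hSA (A {x}) (mem_range_self _)).image u).subset ?_⟩
  rintro _ ⟨⟨n, hn, rfl⟩, hx⟩
  exact ⟨n, ⟨hn, fun hxn => hx (hxn (Finset.mem_coe.mpr (Finset.mem_singleton_self x)))⟩, rfl⟩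

theorem gammaSet_of_mk_lt_pNumber [SecondCountableTopology X] (hX : #X < pNumber) :
    GammaSet X := by
  intro U hU
  obtain ⟨V, hVU, hVc, hVω⟩ := hU.exists_countable_subcover
  have := hVc.to_subtype
  have := hVω.infinite.to_subtype
  obtain ⟨e⟩ : Nonempty (ℕ ≃ V) := nonempty_equiv_of_countable
  have hrange : range (Subtype.val ∘ e) = V := by
    rw [range_comp, e.range_eq_univ, image_univ, Subtype.range_coe]
  obtain ⟨S, hS⟩ := exists_gammaCover_image_of_isOmegaCover_range
    (Subtype.val_injective.comp e.injective) (by rwa [hrange]) hX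
  exact ⟨_, (image_subset_range _ S).trans (hrange.subset.trans hVU), hS⟩

end GammaSet

/-- Every subset of Cantor space of cardinality less than `𝔭` is a γ-set. -/
theorem small_subset_cantor_gammaSet (X : Set (ℕ → Bool)) (h : Cardinal.mk X < pNumber) :
    GammaSet X :=
  gammaSet_of_mk_lt_pNumber h
end
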